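/- arXiv:1704.00520 — 2 statements merged into one kernel-verified Lean document; each statement's English description precedes it below -/
import Mathlib

section
/- Let σ_n > 0, v > 0, ε, m ∈ ℝ and c ≥ 0, and set a = (ε − m)/√(σ_n² + v²). Then the variance of c·Φ((ε − f)/σ_n) when f is distributed according to the density N(· | m, v²) satisfies ∫_ℝ c²·Φ((ε − f)/σ_n)² · N(f | m, v²) df − (∫_ℝ c·Φ((ε − f)/σ_n) · N(f | m, v²) df)² = c² · [Φ(a)·Φ(−a) − 2·T(a, σ_n/√(σ_n² + 2v²))]. -/
/-!
Both sides of each moment identity are functions of `ε` that vanish as `ε → -∞`, so it suffices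
to compare their derivatives in `ε`. Differentiating under the integral sign produces
`N(ε | f, σ²) · N(f | m, v²)`, and a product of two Gaussian densities in `f` is again one, up
to the factor `N(ε | m, s²)` with `s² = σ² + v²`. For the first moment this is the derivative of
`Φ((ε - m)/s)`. For the second moment the remaining integral is again a first moment, which gives
`2 N(ε | m, s²) Φ(a σ/w)` with `a = (ε - m)/s`, `w² = σ² + 2v²`; this is also the derivative of
`Φ(a) - 2 T(a, σ/w)` because `∂ₕ T(h, k) = -φ(h) (Φ(h k) - 1/2)`.
-/

open MeasureTheory Real

/-- Standard normal cumulative distribution function. -/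
noncomputable def Phi (x : ℝ) : ℝ :=
  ∫ t in Set.Iic x, Real.exp (-t ^ 2 / 2) / Real.sqrt (2 * Real.pi)

/-- Gaussian probability density with mean `m` and standard deviation `v`. -/
noncomputable def gaussPdf (m v x : ℝ) : ℝ :=
  Real.exp (-(x - m) ^ 2 / (2 * v ^ 2)) / Real.sqrt (2 * Real.pi * v ^ 2)

/-- Owen's t-function. -/
noncomputable def OwenT (h a : ℝ) : ℝ :=
  (1 / (2 * Real.pi)) * ∫ x in (0:ℝ)..a, Real.exp (-h ^ 2 * (1 + x ^ 2) / 2) / (1 + x ^ 2)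

open Filter Topology ProbabilityTheory

section GaussPdf

lemma gaussPdf_eq_gaussianPDFReal (m v x : ℝ) :
    gaussPdf m v x = gaussianPDFReal m ⟨v ^ 2, sq_nonneg v⟩ x :=
  div_eq_inv_mul _ _

lemma integrable_gaussPdf (m v : ℝ) : Integrable (gaussPdf m v) := by
  rw [funext (gaussPdf_eq_gaussianPDFReal m v)]
  exact integrable_gaussianPDFReal _ _

lemma integral_gaussPdf {v : ℝ} (hv : v ≠ 0) (m : ℝ) : ∫ x, gaussPdf m v x = 1 := by
  simp_rw [gaussPdf_eq_gaussianPDFReal]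
  exact integral_gaussianPDFReal_eq_one m fun h =>
    hv (pow_eq_zero_iff two_ne_zero |>.1 (congrArg NNReal.toReal h))

lemma gaussPdf_pos {v : ℝ} (hv : v ≠ 0) (m x : ℝ) : 0 < gaussPdf m v x := by
  unfold gaussPdf; positivity

@[fun_prop]
lemma continuous_gaussPdf (m v : ℝ) : Continuous (gaussPdf m v) := by
  unfold gaussPdf; fun_prop

lemma norm_gaussPdf_le {v : ℝ} (hv : 0 < v) (m x : ℝ) : ‖gaussPdf m v x‖ ≤ 1 / v := by
  have hexp : Real.exp (-(x - m) ^ 2 / (2 * v ^ 2)) ≤ 1 :=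
    Real.exp_le_one_iff.2 (div_nonpos_of_nonpos_of_nonneg (by nlinarith [sq_nonneg (x - m)])
      (by positivity))
  have hsqrt : v ≤ Real.sqrt (2 * Real.pi * v ^ 2) :=
    Real.le_sqrt_of_sq_le (by nlinarith [Real.pi_gt_three, sq_nonneg v])
  calc ‖gaussPdf m v x‖ = gaussPdf m v x := Real.norm_of_nonneg (gaussPdf_pos hv.ne' m x).le
    _ ≤ 1 / Real.sqrt (2 * Real.pi * v ^ 2) :=
        div_le_div_of_nonneg_right hexp (Real.sqrt_nonneg _)
    _ ≤ 1 / v := one_div_le_one_div_of_le hv hsqrt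

lemma gaussPdf_zero_sub (v x y : ℝ) : gaussPdf 0 v (x - y) = gaussPdf x v y := by
  unfold gaussPdf; ring_nf

lemma gaussPdf_zero_one (t : ℝ) :
    gaussPdf 0 1 t = Real.exp (-t ^ 2 / 2) / Real.sqrt (2 * Real.pi) := by
  simp [gaussPdf]

lemma gaussPdf_zero_one_neg (t : ℝ) : gaussPdf 0 1 (-t) = gaussPdf 0 1 t := by
  simp [gaussPdf]

lemma gaussPdf_eq_div_gaussPdf_zero_one {v : ℝ} (hv : 0 < v) (m x : ℝ) :
    gaussPdf m v x = gaussPdf 0 1 ((x - m) / v) / v := by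
  have hsqrt : Real.sqrt (2 * Real.pi * v ^ 2) = Real.sqrt (2 * Real.pi) * v := by
    rw [Real.sqrt_mul (by positivity), Real.sqrt_sq hv.le]
  rw [gaussPdf_zero_one, gaussPdf, hsqrt, div_div, div_pow]
  congr 2
  field_simp

lemma gaussPdf_mul_gaussPdf {σ v : ℝ} (hσ : 0 < σ) (hv : 0 < v) (x m f : ℝ) :
    gaussPdf x σ f * gaussPdf m v f =
      gaussPdf m (Real.sqrt (σ ^ 2 + v ^ 2)) x *
        gaussPdf ((v ^ 2 * x + σ ^ 2 * m) / (σ ^ 2 + v ^ 2))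
          (σ * v / Real.sqrt (σ ^ 2 + v ^ 2)) f := by
  have hS : 0 < σ ^ 2 + v ^ 2 := by positivity
  have hτ : 0 < σ * v / Real.sqrt (σ ^ 2 + v ^ 2) := by positivity
  have hs2 : Real.sqrt (σ ^ 2 + v ^ 2) ^ 2 = σ ^ 2 + v ^ 2 := Real.sq_sqrt hS.le
  have hsqrt (w : ℝ) : Real.sqrt (2 * Real.pi * w ^ 2) = Real.sqrt (2 * Real.pi) * |w| := by
    rw [Real.sqrt_mul (by positivity), Real.sqrt_sq_eq_abs]
  unfold gaussPdf
  rw [div_mul_div_comm, div_mul_div_comm, ← Real.exp_add, ← Real.exp_add, hsqrt, hsqrt, hsqrt,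
    hsqrt, div_pow, mul_pow, hs2, abs_of_pos hσ, abs_of_pos hv,
    abs_of_pos (Real.sqrt_pos.2 hS), abs_of_pos hτ]
  congr 1
  · congr 1
    field_simp
    ring
  · field_simp

lemma integral_gaussPdf_mul_gaussPdf {σ v : ℝ} (hσ : 0 < σ) (hv : 0 < v) (x m : ℝ) :
    ∫ f, gaussPdf x σ f * gaussPdf m v f = gaussPdf m (Real.sqrt (σ ^ 2 + v ^ 2)) x := by
  simp_rw [gaussPdf_mul_gaussPdf hσ hv, integral_const_mul]
  rw [integral_gaussPdf (by positivity), mul_one]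

end GaussPdf

section Phi

lemma Phi_eq_setIntegral_gaussPdf (x : ℝ) : Phi x = ∫ t in Set.Iic x, gaussPdf 0 1 t := by
  simp only [Phi, gaussPdf_zero_one]

lemma Phi_nonneg (x : ℝ) : 0 ≤ Phi x := by
  rw [Phi_eq_setIntegral_gaussPdf]
  exact setIntegral_nonneg measurableSet_Iic fun t _ => (gaussPdf_pos one_ne_zero 0 t).le

lemma Phi_le_one (x : ℝ) : Phi x ≤ 1 := by
  rw [Phi_eq_setIntegral_gaussPdf]
  exact (setIntegral_le_integral (integrable_gaussPdf 0 1)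
    (Eventually.of_forall fun t => (gaussPdf_pos one_ne_zero 0 t).le)).trans_eq
    (integral_gaussPdf one_ne_zero 0)

lemma norm_Phi_pow_le_one (x : ℝ) (n : ℕ) : ‖Phi x ^ n‖ ≤ 1 := by
  rw [norm_pow, Real.norm_of_nonneg (Phi_nonneg x)]
  exact pow_le_one₀ (Phi_nonneg x) (Phi_le_one x)

lemma tendsto_Phi_atBot : Tendsto Phi atBot (𝓝 0) := by
  simp_rw [funext Phi_eq_setIntegral_gaussPdf]
  exact tendsto_integral_Iic_zero tendsto_id

lemma Phi_neg (x : ℝ) : Phi (-x) = 1 - Phi x := by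
  have hright : Phi (-x) = ∫ t in Set.Ioi x, gaussPdf 0 1 t := by
    rw [Phi_eq_setIntegral_gaussPdf, ← neg_neg x, ← integral_comp_neg_Iic, neg_neg]
    simp only [gaussPdf_zero_one_neg]
  have htotal := intervalIntegral.integral_Iic_add_Ioi (b := x)
    (integrable_gaussPdf 0 1).integrableOn (integrable_gaussPdf 0 1).integrableOn
  rw [integral_gaussPdf one_ne_zero, ← Phi_eq_setIntegral_gaussPdf, ← hright] at htotal
  linarith

lemma Phi_zero : Phi 0 = 1 / 2 := by
  have h := Phi_neg 0
  rw [neg_zero] at h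
  linarith

lemma integral_gaussPdf_zero_one (a b : ℝ) : ∫ t in a..b, gaussPdf 0 1 t = Phi b - Phi a := by
  rw [Phi_eq_setIntegral_gaussPdf, Phi_eq_setIntegral_gaussPdf,
    intervalIntegral.integral_Iic_sub_Iic (integrable_gaussPdf 0 1).integrableOn
      (integrable_gaussPdf 0 1).integrableOn]

lemma hasDerivAt_Phi (x : ℝ) : HasDerivAt Phi (gaussPdf 0 1 x) x := by
  have hFTC :=
    ((continuous_gaussPdf 0 1).integral_hasStrictDerivAt 0 x).hasDerivAt.const_add (Phi 0)
  simpa only [integral_gaussPdf_zero_one, add_sub_cancel] using hFTC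

@[fun_prop]
lemma continuous_Phi : Continuous Phi :=
  continuous_iff_continuousAt.2 fun x => (hasDerivAt_Phi x).continuousAt

lemma hasDerivAt_Phi_sub_div {s : ℝ} (hs : 0 < s) (m x : ℝ) :
    HasDerivAt (fun x => Phi ((x - m) / s)) (gaussPdf m s x) x := by
  rw [gaussPdf_eq_div_gaussPdf_zero_one hs, div_eq_mul_one_div _ s]
  exact (hasDerivAt_Phi _).comp x (((hasDerivAt_id x).sub_const m).div_const s)

end Phi

section Convolution

variable {g g' ρ : ℝ → ℝ}

lemma hasDerivAt_integral_comp_sub_mul {C D : ℝ} (hg : ∀ x, HasDerivAt g (g' x) x)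
    (hg' : Continuous g') (hgC : ∀ x, ‖g x‖ ≤ C) (hg'D : ∀ x, ‖g' x‖ ≤ D) (hρ : Integrable ρ)
    (e : ℝ) :
    HasDerivAt (fun e => ∫ f, g (e - f) * ρ f) (∫ f, g' (e - f) * ρ f) e := by
  have hgc : Continuous g := continuous_iff_continuousAt.2 fun x => (hg x).continuousAt
  refine (hasDerivAt_integral_of_dominated_loc_of_deriv_le (F := fun e f => g (e - f) * ρ f)
    (F' := fun e f => g' (e - f) * ρ f) (bound := fun f => D * ‖ρ f‖)
    Filter.univ_mem (Eventually.of_forall fun x => ?_) ?_ ?_ ?_ (hρ.norm.const_mul D) ?_).2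
  · exact (hgc.comp (continuous_const.sub continuous_id)).aestronglyMeasurable.mul hρ.1
  · exact hρ.bdd_mul (hgc.comp (continuous_const.sub continuous_id)).aestronglyMeasurable
      (Eventually.of_forall fun f => hgC _)
  · exact (hg'.comp (continuous_const.sub continuous_id)).aestronglyMeasurable.mul hρ.1
  · refine Eventually.of_forall fun f x _ => ?_
    rw [norm_mul]
    exact mul_le_mul_of_nonneg_right (hg'D _) (norm_nonneg _)
  · refine Eventually.of_forall fun f x _ => ?_
    simpa using ((hg (x - f)).comp x ((hasDerivAt_id x).sub_const f)).mul_const (ρ f)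

lemma tendsto_integral_comp_sub_mul_atBot {C : ℝ} (hg : Continuous g) (hgC : ∀ x, ‖g x‖ ≤ C)
    (hg0 : Tendsto g atBot (𝓝 0)) (hρ : Integrable ρ) :
    Tendsto (fun e => ∫ f, g (e - f) * ρ f) atBot (𝓝 0) := by
  have hlim := tendsto_integral_filter_of_dominated_convergence (μ := volume)
    (F := fun e f => g (e - f) * ρ f) (fun f => C * ‖ρ f‖)
    (Eventually.of_forall fun e =>
      (hg.comp (continuous_const.sub continuous_id)).aestronglyMeasurable.mul hρ.1)
    (Eventually.of_forall fun e => Eventually.of_forall fun f => by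
      rw [norm_mul]
      exact mul_le_mul_of_nonneg_right (hgC _) (norm_nonneg _))
    (hρ.norm.const_mul C)
    (Eventually.of_forall fun f =>
      (hg0.comp (tendsto_atBot_add_const_right _ (-f) tendsto_id)).mul_const (ρ f))
  simpa using hlim

end Convolution

lemma eq_of_hasDerivAt_of_tendsto_atBot {A B d : ℝ → ℝ} {L : ℝ}
    (hA : ∀ x, HasDerivAt A (d x) x) (hB : ∀ x, HasDerivAt B (d x) x)
    (hAL : Tendsto A atBot (𝓝 L)) (hBL : Tendsto B atBot (𝓝 L)) : A = B := by
  have hconst : ∀ x y, A x - B x = A y - B y :=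
    is_const_of_deriv_eq_zero (fun x => ((hA x).sub (hB x)).differentiableAt)
      fun x => ((hA x).sub (hB x)).deriv.trans (sub_self _)
  funext x
  have hlim : Tendsto (fun y => A y - B y) atBot (𝓝 (A x - B x)) := by
    simpa only [hconst _ x] using tendsto_const_nhds
  have := tendsto_nhds_unique hlim (by simpa using hAL.sub hBL)
  linarith

section OwenT

lemma integral_mul_exp_neg_mul_sq_div_two (h a : ℝ) :
    ∫ x in (0 : ℝ)..a, h * Real.exp (-(h * x) ^ 2 / 2) =
      Real.sqrt (2 * Real.pi) * (Phi (h * a) - 1 / 2) := by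
  have hsubst := intervalIntegral.mul_integral_comp_mul_left (a := 0) (b := a)
    (f := fun u => Real.exp (-u ^ 2 / 2)) h
  have hsqrt : Real.sqrt (2 * Real.pi) ≠ 0 := by positivity
  rw [intervalIntegral.integral_const_mul, hsubst, mul_zero, ← Phi_zero,
    ← integral_gaussPdf_zero_one, ← intervalIntegral.integral_const_mul]
  simp only [gaussPdf_zero_one, mul_div_cancel₀ _ hsqrt]

lemma hasDerivAt_OwenT_integrand (x y : ℝ) :
    HasDerivAt (fun y => Real.exp (-y ^ 2 * (1 + x ^ 2) / 2) / (1 + x ^ 2))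
      (-y * Real.exp (-y ^ 2 * (1 + x ^ 2) / 2)) y := by
  have hx : 1 + x ^ 2 ≠ 0 := by positivity
  refine ((((hasDerivAt_pow 2 y).neg.mul_const (1 + x ^ 2)).div_const 2).exp.div_const
    (1 + x ^ 2)).congr_deriv ?_
  simp only [Pi.neg_apply]
  field_simp
  ring

lemma hasDerivAt_OwenT (a h : ℝ) :
    HasDerivAt (fun h => OwenT h a) (-gaussPdf 0 1 h * (Phi (h * a) - 1 / 2)) h := by
  have hcont (y : ℝ) : Continuous fun x : ℝ => Real.exp (-y ^ 2 * (1 + x ^ 2) / 2) / (1 + x ^ 2) :=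
    by fun_prop (disch := intro x; positivity)
  have hbound (x y : ℝ) (hy : y ∈ Metric.ball h 1) :
      ‖-y * Real.exp (-y ^ 2 * (1 + x ^ 2) / 2)‖ ≤ |h| + 1 := by
    have hy' : |y| ≤ |h| + 1 := by
      have := abs_sub_abs_le_abs_sub y h
      rw [Metric.mem_ball, Real.dist_eq] at hy
      linarith
    have hexp : Real.exp (-y ^ 2 * (1 + x ^ 2) / 2) ≤ 1 :=
      Real.exp_le_one_iff.2 (by nlinarith [sq_nonneg y, sq_nonneg (x * y)])
    rw [norm_mul, norm_neg, Real.norm_eq_abs, Real.norm_of_nonneg (Real.exp_pos _).le]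
    nlinarith [abs_nonneg y, Real.exp_pos (-y ^ 2 * (1 + x ^ 2) / 2)]
  have hInt := (intervalIntegral.hasDerivAt_integral_of_dominated_loc_of_deriv_le
    (F' := fun y x => -y * Real.exp (-y ^ 2 * (1 + x ^ 2) / 2)) (bound := fun _ => |h| + 1)
    (a := 0) (b := a) (Metric.ball_mem_nhds h one_pos)
    (Eventually.of_forall fun y => (hcont y).aestronglyMeasurable)
    ((hcont h).intervalIntegrable (μ := volume) _ _)
    (by fun_prop : Continuous _).aestronglyMeasurable
    (Eventually.of_forall fun x _ y hy => hbound x y hy) intervalIntegrable_const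
    (Eventually.of_forall fun x _ y _ => hasDerivAt_OwenT_integrand x y)).2.const_mul
      (1 / (2 * Real.pi))
  have hfactor (x : ℝ) : -h * Real.exp (-h ^ 2 * (1 + x ^ 2) / 2) =
      -Real.exp (-h ^ 2 / 2) * (h * Real.exp (-(h * x) ^ 2 / 2)) := by
    rw [show -h ^ 2 * (1 + x ^ 2) / 2 = -h ^ 2 / 2 + -(h * x) ^ 2 / 2 by ring, Real.exp_add]
    ring
  rw [intervalIntegral.integral_congr fun x _ => hfactor x, intervalIntegral.integral_const_mul,
    integral_mul_exp_neg_mul_sq_div_two] at hInt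
  refine HasDerivAt.congr_deriv (f := fun h => OwenT h a) hInt ?_
  have hpi : Real.sqrt (2 * Real.pi) ^ 2 = 2 * Real.pi := Real.sq_sqrt (by positivity)
  rw [gaussPdf_zero_one]
  set s := Real.sqrt (2 * Real.pi)
  rw [← hpi]
  field_simp

lemma abs_OwenT_le (h a : ℝ) : |OwenT h a| ≤ |a| * Real.exp (-h ^ 2 / 2) / (2 * Real.pi) := by
  have hint : ‖∫ x in (0 : ℝ)..a, Real.exp (-h ^ 2 * (1 + x ^ 2) / 2) / (1 + x ^ 2)‖ ≤
      Real.exp (-h ^ 2 / 2) * |a - 0| := by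
    refine intervalIntegral.norm_integral_le_of_norm_le_const fun x _ => ?_
    rw [Real.norm_of_nonneg (by positivity)]
    calc Real.exp (-h ^ 2 * (1 + x ^ 2) / 2) / (1 + x ^ 2)
        ≤ Real.exp (-h ^ 2 * (1 + x ^ 2) / 2) :=
          div_le_self (Real.exp_pos _).le (by nlinarith [sq_nonneg x])
      _ ≤ Real.exp (-h ^ 2 / 2) := Real.exp_le_exp.2 (by nlinarith [sq_nonneg (h * x)])
  rw [Real.norm_eq_abs, sub_zero] at hint
  rw [OwenT, abs_mul, abs_of_pos (by positivity : (0 : ℝ) < 1 / (2 * Real.pi))]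
  calc 1 / (2 * Real.pi) * |∫ x in (0 : ℝ)..a, Real.exp (-h ^ 2 * (1 + x ^ 2) / 2) / (1 + x ^ 2)|
      ≤ 1 / (2 * Real.pi) * (Real.exp (-h ^ 2 / 2) * |a|) := by gcongr
    _ = |a| * Real.exp (-h ^ 2 / 2) / (2 * Real.pi) := by ring

lemma tendsto_OwenT_atBot (a : ℝ) : Tendsto (fun h => OwenT h a) atBot (𝓝 0) := by
  have hsq : Tendsto (fun h : ℝ => -h ^ 2 / 2) atBot atBot :=
    (tendsto_neg_atTop_atBot.comp (by simpa [Function.comp_def] using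
      (tendsto_pow_atTop (α := ℝ) two_ne_zero).comp tendsto_neg_atBot_atTop)).atBot_div_const
      two_pos
  have hbound := ((Real.tendsto_exp_atBot.comp hsq).const_mul |a|).div_const (2 * Real.pi)
  rw [mul_zero, zero_div] at hbound
  exact squeeze_zero_norm (fun h => abs_OwenT_le h a) hbound

end OwenT

section Moments

variable {σ v : ℝ}

lemma tendsto_sub_div_atBot {s : ℝ} (hs : 0 < s) (m : ℝ) :
    Tendsto (fun x => (x - m) / s) atBot atBot :=
  (tendsto_atBot_add_const_right _ (-m) tendsto_id).atBot_div_const hs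

lemma hasDerivAt_Phi_div (hσ : 0 < σ) (x : ℝ) :
    HasDerivAt (fun x => Phi (x / σ)) (gaussPdf 0 σ x) x := by
  simpa using hasDerivAt_Phi_sub_div hσ 0 x

lemma tendsto_integral_Phi_pow_mul_gaussPdf_atBot (hσ : 0 < σ) (m : ℝ) {n : ℕ} (hn : n ≠ 0) :
    Tendsto (fun e => ∫ f, Phi ((e - f) / σ) ^ n * gaussPdf m v f) atBot (𝓝 0) := by
  have hlim := (tendsto_Phi_atBot.comp (tendsto_sub_div_atBot hσ 0)).pow n
  simp only [Function.comp_def, sub_zero, zero_pow hn] at hlim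
  exact tendsto_integral_comp_sub_mul_atBot (g := fun x => Phi (x / σ) ^ n) (by fun_prop)
    (fun x => norm_Phi_pow_le_one _ n) hlim (integrable_gaussPdf m v)

lemma integral_Phi_mul_gaussPdf (hσ : 0 < σ) (hv : 0 < v) (m ε : ℝ) :
    ∫ f, Phi ((ε - f) / σ) * gaussPdf m v f = Phi ((ε - m) / Real.sqrt (σ ^ 2 + v ^ 2)) := by
  have hs : 0 < Real.sqrt (σ ^ 2 + v ^ 2) := by positivity
  have hderiv (e : ℝ) : HasDerivAt (fun e => ∫ f, Phi ((e - f) / σ) * gaussPdf m v f)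
      (gaussPdf m (Real.sqrt (σ ^ 2 + v ^ 2)) e) e := by
    have h := hasDerivAt_integral_comp_sub_mul (hasDerivAt_Phi_div hσ) (continuous_gaussPdf 0 σ)
      (fun x => by simpa using norm_Phi_pow_le_one (x / σ) 1) (norm_gaussPdf_le hσ 0)
      (integrable_gaussPdf m v) e
    simpa only [gaussPdf_zero_sub, integral_gaussPdf_mul_gaussPdf hσ hv] using h
  have hlim := tendsto_integral_Phi_pow_mul_gaussPdf_atBot (v := v) hσ m one_ne_zero
  simp only [pow_one] at hlim
  exact congrFun (eq_of_hasDerivAt_of_tendsto_atBot hderiv (hasDerivAt_Phi_sub_div hs m) hlim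
    (tendsto_Phi_atBot.comp (tendsto_sub_div_atBot hs m))) ε

lemma integral_Phi_sq_mul_gaussPdf (hσ : 0 < σ) (hv : 0 < v) (m ε : ℝ) :
    ∫ f, Phi ((ε - f) / σ) ^ 2 * gaussPdf m v f =
      Phi ((ε - m) / Real.sqrt (σ ^ 2 + v ^ 2)) -
        2 * OwenT ((ε - m) / Real.sqrt (σ ^ 2 + v ^ 2)) (σ / Real.sqrt (σ ^ 2 + 2 * v ^ 2)) := by
  set s := Real.sqrt (σ ^ 2 + v ^ 2)
  set w := Real.sqrt (σ ^ 2 + 2 * v ^ 2)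
  have hs : 0 < s := by positivity
  have hw : 0 < w := by positivity
  have hs2 : s ^ 2 = σ ^ 2 + v ^ 2 := Real.sq_sqrt (by positivity)
  have hw2 : w ^ 2 = σ ^ 2 + 2 * v ^ 2 := Real.sq_sqrt (by positivity)
  have hτ : 0 < σ * v / s := by positivity
  have hLHS (e : ℝ) : HasDerivAt (fun e => ∫ f, Phi ((e - f) / σ) ^ 2 * gaussPdf m v f)
      (2 * gaussPdf m s e * Phi ((e - m) / s * (σ / w))) e := by
    have hbound (x : ℝ) : ‖2 * Phi (x / σ) * gaussPdf 0 σ x‖ ≤ 2 * 1 * (1 / σ) := by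
      rw [norm_mul, norm_mul]
      gcongr
      · simp
      · simpa using norm_Phi_pow_le_one (x / σ) 1
      · exact norm_gaussPdf_le hσ 0 x
    have h := hasDerivAt_integral_comp_sub_mul (g := fun x => Phi (x / σ) ^ 2)
      (g' := fun x => 2 * Phi (x / σ) * gaussPdf 0 σ x)
      (fun x => ((hasDerivAt_Phi_div hσ x).pow 2).congr_deriv (by ring))
      (by fun_prop) (fun x => norm_Phi_pow_le_one _ 2) hbound (integrable_gaussPdf m v) e
    have hprod (f : ℝ) : 2 * Phi ((e - f) / σ) * gaussPdf 0 σ (e - f) * gaussPdf m v f =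
        2 * gaussPdf m s e *
          (Phi ((e - f) / σ) *
            gaussPdf ((v ^ 2 * e + σ ^ 2 * m) / (σ ^ 2 + v ^ 2)) (σ * v / s) f) := by
      rw [mul_assoc, gaussPdf_zero_sub, gaussPdf_mul_gaussPdf hσ hv]
      ring
    have hsqrt : Real.sqrt (σ ^ 2 + (σ * v / s) ^ 2) = σ * w / s := by
      rw [← Real.sqrt_sq (by positivity : 0 ≤ σ * w / s)]
      congr 1
      field_simp
      rw [hs2, hw2]
      ring
    have harg : (e - (v ^ 2 * e + σ ^ 2 * m) / (σ ^ 2 + v ^ 2)) / (σ * w / s) =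
        (e - m) / s * (σ / w) := by
      rw [← hs2]
      field_simp
      linear_combination e * hs2
    simpa only [hprod, integral_const_mul, integral_Phi_mul_gaussPdf hσ hτ, hsqrt, harg] using h
  have hRHS (e : ℝ) : HasDerivAt (fun e => Phi ((e - m) / s) - 2 * OwenT ((e - m) / s) (σ / w))
      (2 * gaussPdf m s e * Phi ((e - m) / s * (σ / w))) e := by
    have hOwen := ((hasDerivAt_OwenT (σ / w) ((e - m) / s)).comp e
      (((hasDerivAt_id e).sub_const m).div_const s)).const_mul 2
    refine ((hasDerivAt_Phi_sub_div hs m e).sub hOwen).congr_deriv ?_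
    rw [gaussPdf_eq_div_gaussPdf_zero_one hs]
    ring
  have hRHS0 :
      Tendsto (fun e => Phi ((e - m) / s) - 2 * OwenT ((e - m) / s) (σ / w)) atBot (𝓝 0) := by
    have h := (tendsto_Phi_atBot.sub ((tendsto_OwenT_atBot (σ / w)).const_mul 2)).comp
      (tendsto_sub_div_atBot hs m)
    rwa [mul_zero, sub_zero] at h
  exact congrFun (eq_of_hasDerivAt_of_tendsto_atBot hLHS hRHS
    (tendsto_integral_Phi_pow_mul_gaussPdf_atBot hσ m two_ne_zero) hRHS0) ε

end Moments

theorem stmt_1_general (σn v ε m c : ℝ) (hσ : 0 < σn) (hv : 0 < v) :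
    (∫ f : ℝ, c ^ 2 * Phi ((ε - f) / σn) ^ 2 * gaussPdf m v f)
      - (∫ f : ℝ, c * Phi ((ε - f) / σn) * gaussPdf m v f) ^ 2
      = c ^ 2 *
        (Phi ((ε - m) / Real.sqrt (σn ^ 2 + v ^ 2))
            * Phi (-((ε - m) / Real.sqrt (σn ^ 2 + v ^ 2)))
          - 2 * OwenT ((ε - m) / Real.sqrt (σn ^ 2 + v ^ 2))
              (σn / Real.sqrt (σn ^ 2 + 2 * v ^ 2))) := by
  simp only [mul_assoc, integral_const_mul, integral_Phi_sq_mul_gaussPdf hσ hv,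
    integral_Phi_mul_gaussPdf hσ hv, Phi_neg]
  ring

theorem stmt_1 (σn v ε m c : ℝ) (hσ : 0 < σn) (hv : 0 < v) (hc : 0 ≤ c) :
    (∫ f : ℝ, c ^ 2 * Phi ((ε - f) / σn) ^ 2 * gaussPdf m v f)
      - (∫ f : ℝ, c * Phi ((ε - f) / σn) * gaussPdf m v f) ^ 2
      = c ^ 2 *
        (Phi ((ε - m) / Real.sqrt (σn ^ 2 + v ^ 2))
            * Phi (-((ε - m) / Real.sqrt (σn ^ 2 + v ^ 2)))
          - 2 * OwenT ((ε - m) / Real.sqrt (σn ^ 2 + v ^ 2))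
              (σn / Real.sqrt (σn ^ 2 + 2 * v ^ 2))) :=
  stmt_1_general σn v ε m c hσ hv
end

section
/- Let σ > 0, w ≥ 0, τ > 0 and ε, m₀ ∈ ℝ. Then ∫_ℝ T((ε − m)/√(σ² + w²), σ/√(σ² + 2w²)) · N(m | m₀, τ²) dm = T((ε − m₀)/√(σ² + w² + τ²), σ/√(σ² + 2w² + 2τ²)). -/
/-!
Write `T(h, a) = (2π)⁻¹ ∫₀ᵃ f_h(x) dx` with `f_h(x) = exp(-h²(1 + x²)/2)/(1 + x²)` and exchange the
Gaussian average over `m` with the `x`-integral. With `S = σ² + w²`, for fixed `x` the `m`-integral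
is a convolution of two Gaussians, of variances `S/(1 + x²)` and `τ²`, and it comes out as
`f_k(ψ x) ψ'(x)` with `k = (ε - m₀)/√(S + τ²)` and `ψ x = √S x / √(S + τ²(1 + x²))`.
Substituting `y = ψ x` gives `T(k, ψ a)`, and `ψ (σ/√(σ² + 2w²)) = σ/√(σ² + 2w² + 2τ²)`.
-/

open MeasureTheory Real

noncomputable def owenIntegrand (h x : ℝ) : ℝ :=
  exp (-h ^ 2 * (1 + x ^ 2) / 2) / (1 + x ^ 2)

lemma owenT_eq_intervalIntegral (h a : ℝ) :
    OwenT h a = 1 / (2 * π) * ∫ x in (0:ℝ)..a, owenIntegrand h x := rfl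

lemma Continuous.owenIntegrand {α : Type*} [TopologicalSpace α] {f g : α → ℝ}
    (hf : Continuous f) (hg : Continuous g) : Continuous fun p => owenIntegrand (f p) (g p) :=
  Continuous.div (by fun_prop) (by fun_prop) fun p => by positivity

lemma abs_owenIntegrand_le_one (h x : ℝ) : |owenIntegrand h x| ≤ 1 := by
  have hx : (1 : ℝ) ≤ 1 + x ^ 2 := by nlinarith [sq_nonneg x]
  have hexp : exp (-h ^ 2 * (1 + x ^ 2) / 2) ≤ 1 := by
    rw [exp_le_one_iff, neg_mul, neg_div]
    exact neg_nonpos_of_nonneg (by positivity)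
  rw [owenIntegrand, abs_of_nonneg (by positivity), div_le_one (by positivity)]
  linarith

lemma integral_intervalIntegral_mul_swap {F : ℝ → ℝ → ℝ} {g : ℝ → ℝ} {C : ℝ}
    (hF : Continuous (Function.uncurry F)) (hFC : ∀ m x, |F m x| ≤ C) (hg : Integrable g)
    (a b : ℝ) :
    ∫ m, (∫ x in a..b, F m x) * g m = ∫ x in a..b, ∫ m, F m x * g m := by
  have hfin : IsFiniteMeasure (volume.restrict (Set.uIoc a b)) :=
    isFiniteMeasure_restrict.mpr measure_Ioc_lt_top.ne
  have hint : Integrable (Function.uncurry fun m x => F m x * g m)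
      (volume.prod (volume.restrict (Set.uIoc a b))) := by
    refine Integrable.mono' ((hg.norm.const_mul C).mul_prod (integrable_const (1 : ℝ))) ?_ ?_
    · exact hF.aestronglyMeasurable.mul hg.aestronglyMeasurable.comp_fst
    · filter_upwards with p
      simp only [Function.uncurry, norm_mul, Real.norm_eq_abs, mul_one]
      exact mul_le_mul_of_nonneg_right (hFC p.1 p.2) (abs_nonneg _)
  simp_rw [intervalIntegral.intervalIntegral_eq_integral_uIoc, smul_eq_mul, mul_assoc,
    integral_const_mul, ← integral_mul_const]
  rw [integral_integral_swap hint]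

lemma integral_exp_neg_sq_div_mul_gaussPdf {s τ : ℝ} (hs : 0 < s) (hτ : 0 < τ) (ε m₀ : ℝ) :
    ∫ m, exp (-(ε - m) ^ 2 / (2 * s)) * gaussPdf m₀ τ m
      = √(s / (s + τ ^ 2)) * exp (-(ε - m₀) ^ 2 / (2 * (s + τ ^ 2))) := by
  set b := (s + τ ^ 2) / (2 * s * τ ^ 2)
  set c := (τ ^ 2 * ε + s * m₀) / (s + τ ^ 2)
  have complete_square : ∀ m, -(ε - m) ^ 2 / (2 * s) + -(m - m₀) ^ 2 / (2 * τ ^ 2)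
      = -(ε - m₀) ^ 2 / (2 * (s + τ ^ 2)) + -b * (m - c) ^ 2 := by
    intro m
    simp only [b, c]
    field_simp
    ring
  have hπb : π / b = 2 * π * τ ^ 2 * (s / (s + τ ^ 2)) := by
    rw [div_div_eq_mul_div]
    field_simp
  simp_rw [gaussPdf, mul_div_assoc', ← exp_add, complete_square, exp_add, mul_div_right_comm,
    integral_const_mul]
  rw [integral_sub_right_eq_self (fun m => exp (-b * m ^ 2)) c, integral_gaussian, hπb,
    sqrt_mul (by positivity : 0 ≤ 2 * π * τ ^ 2) (s / (s + τ ^ 2))]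
  field_simp

lemma integrable_gaussPdf_s5 (m₀ : ℝ) {τ : ℝ} (hτ : 0 < τ) : Integrable (gaussPdf m₀ τ) := by
  have hexp : ∀ m, exp (-(m - m₀) ^ 2 / (2 * τ ^ 2)) = exp (-(1 / (2 * τ ^ 2)) * (m - m₀) ^ 2) := by
    intro m
    congr 1
    field_simp
  unfold gaussPdf
  simp_rw [hexp]
  exact ((integrable_exp_neg_mul_sq (by positivity)).comp_sub_right m₀).div_const _

noncomputable def owenReparam (S τ x : ℝ) : ℝ :=
  √S * x / √(S + τ ^ 2 * (1 + x ^ 2))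

noncomputable def owenReparamDeriv (S τ x : ℝ) : ℝ :=
  √S * (S + τ ^ 2) / ((S + τ ^ 2 * (1 + x ^ 2)) * √(S + τ ^ 2 * (1 + x ^ 2)))

section Reparam

variable {S : ℝ} (hS : 0 < S) (τ : ℝ)
include hS

lemma one_add_owenReparam_sq (x : ℝ) :
    1 + owenReparam S τ x ^ 2 = (S + τ ^ 2) * (1 + x ^ 2) / (S + τ ^ 2 * (1 + x ^ 2)) := by
  have hq : 0 < S + τ ^ 2 * (1 + x ^ 2) := by positivity
  rw [owenReparam, div_pow, mul_pow, sq_sqrt hS.le, sq_sqrt hq.le]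
  field_simp
  ring

lemma hasDerivAt_owenReparam (x : ℝ) :
    HasDerivAt (owenReparam S τ) (owenReparamDeriv S τ x) x := by
  have hq : 0 < S + τ ^ 2 * (1 + x ^ 2) := by positivity
  have hq' : HasDerivAt (fun x : ℝ => S + τ ^ 2 * (1 + x ^ 2)) (τ ^ 2 * (2 * x)) x := by
    simpa using ((hasDerivAt_pow 2 x).const_add 1).const_mul (τ ^ 2) |>.const_add S
  have hnum : HasDerivAt (fun x : ℝ => √S * x) √S x := by
    simpa using (hasDerivAt_id x).const_mul √S
  refine (hnum.div (hq'.sqrt hq.ne') (sqrt_pos.2 hq).ne').congr_deriv ?_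
  have hsq : √(S + τ ^ 2 * (1 + x ^ 2)) ^ 2 = S + τ ^ 2 * (1 + x ^ 2) := sq_sqrt hq.le
  rw [owenReparamDeriv, hsq]
  field_simp
  linear_combination hsq

lemma continuous_owenReparamDeriv : Continuous (owenReparamDeriv S τ) :=
  Continuous.div (by fun_prop) (by fun_prop) fun x => by positivity

end Reparam

lemma integral_owenIntegrand_mul_gaussPdf {S τ : ℝ} (hS : 0 < S) (hτ : 0 < τ) (ε m₀ x : ℝ) :
    ∫ m, owenIntegrand ((ε - m) / √S) x * gaussPdf m₀ τ m
      = owenIntegrand ((ε - m₀) / √(S + τ ^ 2)) (owenReparam S τ x) * owenReparamDeriv S τ x := by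
  have h1x : 0 < 1 + x ^ 2 := by positivity
  have hvar : ∀ m, owenIntegrand ((ε - m) / √S) x
      = exp (-(ε - m) ^ 2 / (2 * (S / (1 + x ^ 2)))) / (1 + x ^ 2) := by
    intro m
    rw [owenIntegrand, div_pow, sq_sqrt hS.le]
    congr 2
    field_simp
  have hvar_add : S / (1 + x ^ 2) + τ ^ 2 = (S + τ ^ 2 * (1 + x ^ 2)) / (1 + x ^ 2) := by
    field_simp
  have hexp : -((ε - m₀) / √(S + τ ^ 2)) ^ 2 * (1 + owenReparam S τ x ^ 2) / 2
      = -(ε - m₀) ^ 2 / (2 * ((S + τ ^ 2 * (1 + x ^ 2)) / (1 + x ^ 2))) := by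
    rw [one_add_owenReparam_sq hS, div_pow, sq_sqrt (by positivity)]
    field_simp
  simp_rw [hvar, div_mul_eq_mul_div, integral_div,
    integral_exp_neg_sq_div_mul_gaussPdf (by positivity : 0 < S / (1 + x ^ 2)) hτ, hvar_add]
  rw [owenIntegrand, hexp, one_add_owenReparam_sq hS, owenReparamDeriv,
    div_div_div_cancel_right₀ h1x.ne', sqrt_div hS.le]
  field_simp

theorem integral_owenT_mul_gaussPdf {S τ : ℝ} (hS : 0 < S) (hτ : 0 < τ) (ε m₀ a : ℝ) :
    ∫ m, OwenT ((ε - m) / √S) a * gaussPdf m₀ τ m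
      = OwenT ((ε - m₀) / √(S + τ ^ 2)) (owenReparam S τ a) := by
  have hF : Continuous (Function.uncurry fun m x => owenIntegrand ((ε - m) / √S) x) :=
    .owenIntegrand (by fun_prop) continuous_snd
  have hg : Continuous (owenIntegrand ((ε - m₀) / √(S + τ ^ 2))) :=
    continuous_const.owenIntegrand continuous_id
  have hψ0 : owenReparam S τ 0 = 0 := by simp [owenReparam]
  have hcov := intervalIntegral.integral_comp_mul_deriv (a := 0) (b := a)
    (fun x _ => hasDerivAt_owenReparam hS τ x) (continuous_owenReparamDeriv hS τ).continuousOn hg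
  rw [hψ0] at hcov
  simp_rw [owenT_eq_intervalIntegral, mul_assoc, integral_const_mul]
  rw [integral_intervalIntegral_mul_swap hF (fun _ _ => abs_owenIntegrand_le_one _ _)
      (integrable_gaussPdf_s5 m₀ hτ)]
  simp_rw [integral_owenIntegrand_mul_gaussPdf hS hτ]
  exact congrArg _ hcov

theorem stmt_5_general (σ w τ ε m₀ : ℝ) (hσ : 0 < σ) (hτ : 0 < τ) :
    ∫ m : ℝ,
        OwenT ((ε - m) / Real.sqrt (σ ^ 2 + w ^ 2)) (σ / Real.sqrt (σ ^ 2 + 2 * w ^ 2))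
          * gaussPdf m₀ τ m
      = OwenT ((ε - m₀) / Real.sqrt (σ ^ 2 + w ^ 2 + τ ^ 2))
          (σ / Real.sqrt (σ ^ 2 + 2 * w ^ 2 + 2 * τ ^ 2)) := by
  have hS : 0 < σ ^ 2 + w ^ 2 := by positivity
  have hB : 0 < σ ^ 2 + 2 * w ^ 2 := by positivity
  have hψ : owenReparam (σ ^ 2 + w ^ 2) τ (σ / √(σ ^ 2 + 2 * w ^ 2))
      = σ / √(σ ^ 2 + 2 * w ^ 2 + 2 * τ ^ 2) := by
    have hq : σ ^ 2 + w ^ 2 + τ ^ 2 * (1 + (σ / √(σ ^ 2 + 2 * w ^ 2)) ^ 2)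
        = (σ ^ 2 + w ^ 2) * (σ ^ 2 + 2 * w ^ 2 + 2 * τ ^ 2) / (σ ^ 2 + 2 * w ^ 2) := by
      rw [div_pow, sq_sqrt hB.le]
      field_simp
      ring
    rw [owenReparam, hq, sqrt_div (by positivity), sqrt_mul hS.le]
    field_simp
  rw [integral_owenT_mul_gaussPdf hS hτ, hψ]

theorem stmt_5 (σ w τ ε m₀ : ℝ) (hσ : 0 < σ) (hw : 0 ≤ w) (hτ : 0 < τ) :
    ∫ m : ℝ,
        OwenT ((ε - m) / Real.sqrt (σ ^ 2 + w ^ 2)) (σ / Real.sqrt (σ ^ 2 + 2 * w ^ 2))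
          * gaussPdf m₀ τ m
      = OwenT ((ε - m₀) / Real.sqrt (σ ^ 2 + w ^ 2 + τ ^ 2))
          (σ / Real.sqrt (σ ^ 2 + 2 * w ^ 2 + 2 * τ ^ 2)) :=
  stmt_5_general σ w τ ε m₀ hσ hτ
end
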